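/- Let G be a bipartite graph with bipartition (X,Y), |X| = r ≤ s = |Y|, and m ≥ n = r + s edges with m = ds + l, 1 ≤ l ≤ s − 1. Then κ'(G)·κ'(G^{bc}) ≤ ⌊m/s⌋·(r − 1 − ⌊m/s⌋). -/

import Mathlib

open SimpleGraph Sum

noncomputable def minDeg {V : Type*} [Fintype V] (G : SimpleGraph V) : ℕ :=
  @SimpleGraph.minDegree V G _ (Classical.decRel _)

/-- Edge-connectivity: minimum size of an edge set whose deletion disconnects
the graph (0 if the graph is disconnected or cannot be disconnected). -/
noncomputable def edgeConn {V : Type*} [Fintype V] (G : SimpleGraph V) : ℕ :=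
  sInf {n | ∃ F : Finset (Sym2 V), F.card = n ∧ ↑F ⊆ G.edgeSet ∧
    ¬ (G.deleteEdges ↑F).Connected}

/-- Vertex-connectivity: minimum size of a vertex set whose removal leaves a
graph which is disconnected or has only one vertex. -/
noncomputable def vertConn {V : Type*} [Fintype V] (G : SimpleGraph V) : ℕ :=
  sInf {n | ∃ S : Finset V, S.card = n ∧
    (¬ (G.induce ((↑S : Set V)ᶜ)).Connected ∨ Nat.card (((↑S : Set V)ᶜ : Set V)) = 1)}

/-- `G` on `X ⊕ Y` is bipartite with parts `X` and `Y`. -/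
def IsBipartition {X Y : Type*} (G : SimpleGraph (X ⊕ Y)) : Prop :=
  ∀ a b, G.Adj a b → (a.isLeft ∧ b.isRight) ∨ (a.isRight ∧ b.isLeft)

/-- Bipartite complement with respect to the bipartition `(X, Y)`. -/
def bipCompl {X Y : Type*} (G : SimpleGraph (X ⊕ Y)) : SimpleGraph (X ⊕ Y) where
  Adj a b := ((a.isLeft ∧ b.isRight) ∨ (a.isRight ∧ b.isLeft)) ∧ ¬ G.Adj a b
  symm := ⟨fun a b h => ⟨h.1.symm.imp And.symm And.symm, fun h' => h.2 h'.symm⟩⟩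
  loopless := ⟨fun a h => by rcases h.1 with ⟨h1, h2⟩ | ⟨h1, h2⟩ <;> cases a <;> simp_all⟩

/-! Edge-connectivity is bounded by every degree. The degrees of the vertices of `Y` sum to
`m = d s + l` with `0 < l < s`, so some `y ∈ Y` has degree at most `d` in `G` and some `y' ∈ Y`
has degree at least `d + 1` in `G`, hence at most `r - 1 - d` in the bipartite complement. -/

open Finset Function

namespace SimpleGraph

variable {V : Type*} [Fintype V] (G : SimpleGraph V)

lemma isEdgeConnected_edgeConn : G.IsEdgeConnected (edgeConn G) := by
  classical
  intro u v s hs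
  set F := (s ∩ G.edgeSet).toFinset
  have hFcard : F.card < edgeConn G := by
    rw [← ENat.natCast_lt_natCast, ← Set.encard_coe_eq_coe_finsetCard, Set.coe_toFinset]
    exact (Set.encard_le_encard Set.inter_subset_left).trans_lt hs
  have hconn : (G.deleteEdges ↑F).Connected := by
    by_contra h
    exact Nat.notMem_of_lt_sInf hFcard ⟨F, rfl, by simp [F], h⟩
  rw [deleteEdges_eq_inter_edgeSet, ← Set.coe_toFinset (s ∩ G.edgeSet)]
  exact hconn.preconnected u v

lemma edgeConn_le_degree (v : V) [Fintype (G.neighborSet v)] : edgeConn G ≤ G.degree v := by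
  rcases subsingleton_or_nontrivial V with _ | _
  · -- a graph on one vertex stays connected, so `edgeConn G = sInf ∅ = 0`
    have : Nonempty V := ⟨v⟩
    simp [edgeConn, Connected.of_subsingleton]
  · exact G.isEdgeConnected_edgeConn.le_degree

end SimpleGraph

section Bipartition

variable {X Y : Type*} {G : SimpleGraph (X ⊕ Y)}

lemma isBipartition_bipCompl (G : SimpleGraph (X ⊕ Y)) : IsBipartition (bipCompl G) :=
  fun _ _ h ↦ h.1

variable [Fintype X] [Fintype Y]

lemma IsBipartition.isBipartiteWith (hG : IsBipartition G) :
    G.IsBipartiteWith ↑(univ.map Embedding.inl : Finset (X ⊕ Y))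
      ↑(univ.map Embedding.inr : Finset (X ⊕ Y)) where
  disjoint := by simpa using Set.isCompl_range_inl_range_inr.disjoint
  mem_of_adj a b h := by
    rcases hG a b h with ⟨ha, hb⟩ | ⟨ha, hb⟩ <;> cases a <;> cases b <;> simp_all

variable [DecidableRel G.Adj]

lemma IsBipartition.sum_degree_inr (hG : IsBipartition G) :
    ∑ y : Y, G.degree (inr y) = G.edgeSet.ncard := by
  rw [← coe_edgeFinset, Set.ncard_coe_finset,
    ← isBipartiteWith_sum_degrees_eq_card_edges' hG.isBipartiteWith, sum_map]
  rfl

lemma IsBipartition.degree_bipCompl_add_degree [DecidableRel (bipCompl G).Adj]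
    (hG : IsBipartition G) (y : Y) :
    (bipCompl G).degree (inr y) + G.degree (inr y) = Fintype.card X := by
  rw [← card_neighborFinset_eq_degree, ← card_neighborFinset_eq_degree,
    isBipartiteWith_neighborFinset' (isBipartition_bipCompl G).isBipartiteWith (by simp),
    isBipartiteWith_neighborFinset' hG.isBipartiteWith (by simp)]
  have hcompl : ∀ v ∈ (univ.map Embedding.inl : Finset (X ⊕ Y)),
      (bipCompl G).Adj v (inr y) ↔ ¬ G.Adj v (inr y) := by
    simp [bipCompl]
  rw [filter_congr hcompl, add_comm, card_filter_add_card_filter_not, card_map, card_univ]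

end Bipartition

theorem edgeConn_prod_le_of_not_dvd_general {X Y : Type*} [Fintype X] [Fintype Y] {r s m d l : ℕ}
    (G : SimpleGraph (X ⊕ Y)) (hbip : IsBipartition G)
    (hr : Fintype.card X = r) (hs : Fintype.card Y = s)
    (hm : G.edgeSet.ncard = m)
    (hdl : m = d * s + l) (hl1 : 1 ≤ l) (hl2 : l < s) :
    edgeConn G * edgeConn (bipCompl G) ≤ d * (r - 1 - d) := by
  classical
  have hsum : ∑ y : Y, G.degree (inr y) = d * s + l := by rw [hbip.sum_degree_inr, hm, hdl]
  obtain ⟨y₁, -, hy₁⟩ : ∃ y ∈ univ, G.degree (inr y) < d + 1 := by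
    apply exists_lt_of_sum_lt
    simp only [hsum, sum_const, card_univ, hs, smul_eq_mul]
    nlinarith
  obtain ⟨y₂, -, hy₂⟩ : ∃ y ∈ univ, d < G.degree (inr y) := by
    apply exists_lt_of_sum_lt
    simp only [hsum, sum_const, card_univ, hs, smul_eq_mul]
    nlinarith
  have hcompl := hbip.degree_bipCompl_add_degree y₂
  calc edgeConn G * edgeConn (bipCompl G)
      ≤ G.degree (inr y₁) * (bipCompl G).degree (inr y₂) :=
        Nat.mul_le_mul (edgeConn_le_degree G _) (edgeConn_le_degree _ _)
    _ ≤ d * (r - 1 - d) := Nat.mul_le_mul (by omega) (by omega)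

theorem edgeConn_prod_le_of_not_dvd {X Y : Type*} [Fintype X] [Fintype Y] {r s m d l : ℕ}
    (G : SimpleGraph (X ⊕ Y)) (hbip : IsBipartition G)
    (hr : Fintype.card X = r) (hs : Fintype.card Y = s) (hrs : r ≤ s)
    (hm : G.edgeSet.ncard = m) (hm1 : r + s ≤ m)
    (hdl : m = d * s + l) (hl1 : 1 ≤ l) (hl2 : l < s) :
    edgeConn G * edgeConn (bipCompl G) ≤ d * (r - 1 - d) :=
  edgeConn_prod_le_of_not_dvd_general G hbip hr hs hm hdl hl1 hl2
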